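/- arXiv:2411.15385 — 2 statements merged into one kernel-verified Lean document; each statement's English description precedes it below -/
import Mathlib

section
/- Let Q be a k×k positive semidefinite real matrix with all diagonal entries equal to 1. Then the maximum over rows i of the squared row norm ∑_j Q_{ij}² is at most 2k^{-1/2} times the squared Frobenius norm ∑_{i,j} Q_{ij}². -/
/-!
Write `r = ∑ⱼ Q i j ^ 2` and `F = ∑ᵢ ∑ⱼ Q i j ^ 2`, and let `qᵢ` be the `i`-th row of `Q`, so that
`r = ⟨eᵢ, Q qᵢ⟩`. Cauchy–Schwarz for the semi-inner product `⟨x, Q y⟩` gives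
`r² ≤ Q i i · ⟨qᵢ, Q qᵢ⟩`, and Cauchy–Schwarz over the entries of `Q` gives `⟨qᵢ, Q qᵢ⟩ ≤ √F · r`;
hence `r ≤ Q i i · √F`. A unit diagonal forces `F ≥ k`, so `r ≤ √F ≤ F / √k`.
-/

open Finset

namespace Matrix

variable {m n : Type*} [Fintype m] [Fintype n]

theorem sq_dotProduct_mulVec_le_sum_sq (A : Matrix m n ℝ) (x : m → ℝ) (y : n → ℝ) :
    (x ⬝ᵥ A *ᵥ y) ^ 2 ≤ (∑ i, ∑ j, A i j ^ 2) * (∑ i, x i ^ 2) * ∑ j, y j ^ 2 := by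
  have hxy : x ⬝ᵥ A *ᵥ y = ∑ p : m × n, A p.1 p.2 * (x p.1 * y p.2) := by
    simp only [dotProduct, mulVec, Finset.mul_sum, Fintype.sum_prod_type]
    exact sum_congr rfl fun i _ => sum_congr rfl fun j _ => by ring
  have hsq : ∑ p : m × n, (x p.1 * y p.2) ^ 2 = (∑ i, x i ^ 2) * ∑ j, y j ^ 2 := by
    simp only [mul_pow, Fintype.sum_prod_type, sum_mul_sum]
  rw [hxy, mul_assoc, ← hsq]
  simpa only [Fintype.sum_prod_type] using
    sum_mul_sq_le_sq_mul_sq univ (fun p : m × n => A p.1 p.2) (fun p => x p.1 * y p.2)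

theorem sum_sq_diag_le_sum_sq (A : Matrix n n ℝ) : ∑ i, A i i ^ 2 ≤ ∑ i, ∑ j, A i j ^ 2 :=
  sum_le_sum fun i _ => single_le_sum (f := fun j => A i j ^ 2) (fun _ _ => sq_nonneg _) (mem_univ i)

namespace PosSemidef

variable {Q : Matrix n n ℝ}

theorem sq_dotProduct_mulVec_le (hQ : Q.PosSemidef) (x y : n → ℝ) :
    (x ⬝ᵥ Q *ᵥ y) ^ 2 ≤ (x ⬝ᵥ Q *ᵥ x) * (y ⬝ᵥ Q *ᵥ y) := by
  classical
  have hsymm : (toBilin' Q).IsSymm :=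
    isSymm_toBilin'_iff_isSymm.mpr (isHermitian_iff_isSymm.mp hQ.1)
  have hnonneg (z : n → ℝ) : 0 ≤ toBilin' Q z z := by
    simpa only [toBilin'_apply', star_trivial] using hQ.dotProduct_mulVec_nonneg z
  simpa only [toBilin'_apply'] using
    (toBilin' Q).apply_sq_le_of_symm hnonneg (LinearMap.BilinForm.isSymm_iff.mp hsymm) x y

theorem sq_sum_sq_row_le [DecidableEq n] (hQ : Q.PosSemidef) (i : n) :
    (∑ j, Q i j ^ 2) ^ 2 ≤ Q i i ^ 2 * ∑ i, ∑ j, Q i j ^ 2 := by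
  have hrow : Pi.single i 1 ⬝ᵥ Q *ᵥ Q i = ∑ j, Q i j ^ 2 := by
    rw [single_dotProduct, one_mul]
    simp only [mulVec, dotProduct, sq]
  have hsingle : Pi.single i 1 ⬝ᵥ Q *ᵥ Pi.single i 1 = Q i i := by
    simp [mulVec_single]
  have hform := hQ.sq_dotProduct_mulVec_le (Pi.single i 1) (Q i)
  have hentries := sq_dotProduct_mulVec_le_sum_sq Q (Q i) (Q i)
  rw [hrow, hsingle] at hform
  set r := ∑ j, Q i j ^ 2
  set q := Q i ⬝ᵥ Q *ᵥ Q i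
  have h4 : r ^ 2 * r ^ 2 ≤ Q i i ^ 2 * (∑ i, ∑ j, Q i j ^ 2) * r ^ 2 :=
    calc r ^ 2 * r ^ 2 = (r ^ 2) ^ 2 := by ring
      _ ≤ (Q i i * q) ^ 2 := pow_le_pow_left₀ (sq_nonneg r) hform 2
      _ = Q i i ^ 2 * q ^ 2 := by ring
      _ ≤ Q i i ^ 2 * ((∑ i, ∑ j, Q i j ^ 2) * r * r) := by gcongr
      _ = Q i i ^ 2 * (∑ i, ∑ j, Q i j ^ 2) * r ^ 2 := by ring
  rcases (sq_nonneg r).eq_or_lt with hr | hr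
  · rw [← hr]
    positivity
  · exact le_of_mul_le_mul_right h4 hr

theorem sum_sq_row_mul_sqrt_card_le [DecidableEq n] (hQ : Q.PosSemidef)
    (hdiag : ∀ i, Q i i = 1) (i : n) :
    (∑ j, Q i j ^ 2) * √(Fintype.card n) ≤ ∑ i, ∑ j, Q i j ^ 2 := by
  have hrow : (∑ j, Q i j ^ 2) ^ 2 ≤ ∑ i, ∑ j, Q i j ^ 2 := by
    simpa [hdiag] using hQ.sq_sum_sq_row_le i
  have hcard : (Fintype.card n : ℝ) ≤ ∑ i, ∑ j, Q i j ^ 2 := by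
    simpa [hdiag] using sum_sq_diag_le_sum_sq Q
  have hF : 0 ≤ ∑ i, ∑ j, Q i j ^ 2 := by positivity
  have hsq : ((∑ j, Q i j ^ 2) * √(Fintype.card n)) ^ 2 ≤ (∑ i, ∑ j, Q i j ^ 2) ^ 2 := by
    rw [mul_pow, Real.sq_sqrt (Nat.cast_nonneg _), sq (∑ i, ∑ j, Q i j ^ 2)]
    exact mul_le_mul hrow hcard (Nat.cast_nonneg _) hF
  exact (pow_le_pow_iff_left₀ (by positivity) hF two_ne_zero).mp hsq

end PosSemidef

end Matrix

theorem psd_row_norm_le_unit_diag_general (k : ℕ)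
    (Q : Matrix (Fin k) (Fin k) ℝ) (hQ : Q.PosSemidef) (hdiag : ∀ i, Q i i = 1) :
    ∀ i, ∑ j, (Q i j) ^ 2 ≤ 2 / Real.sqrt k * ∑ i, ∑ j, (Q i j) ^ 2 := by
  intro i
  have hk : 0 < Real.sqrt k := Real.sqrt_pos.mpr (mod_cast i.pos)
  have hrow := hQ.sum_sq_row_mul_sqrt_card_le hdiag i
  rw [Fintype.card_fin] at hrow
  have hF : 0 ≤ ∑ i, ∑ j, Q i j ^ 2 := by positivity
  rw [div_mul_eq_mul_div, le_div_iff₀ hk]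
  linarith

/-- For a k×k PSD matrix with unit diagonal, every squared row norm is at most
`2 k^{-1/2}` times the squared Frobenius norm. -/
theorem psd_row_norm_le_unit_diag (k : ℕ) (hk : 0 < k)
    (Q : Matrix (Fin k) (Fin k) ℝ) (hQ : Q.PosSemidef) (hdiag : ∀ i, Q i i = 1) :
    ∀ i, ∑ j, (Q i j) ^ 2 ≤ 2 / Real.sqrt k * ∑ i, ∑ j, (Q i j) ^ 2 :=
  psd_row_norm_le_unit_diag_general k Q hQ hdiag
end

section
/- Let w_1, …, w_k ∈ ℝ^d be unit vectors with |⟨w_i, w_j⟩| ≤ 1 − (log k)/√k for all i ≠ j, let λ ∈ ℝ^k and c, ĉ ∈ {±1/√k}^k. Then for any integer s ≥ ⌈(3/2)√k⌉, |∑_{i≠j} λ_i λ_j c_i ĉ_j ⟨w_i, w_j⟩^s| ≤ (1 − (log k)/√k)^s ‖λ‖₂² ≤ ‖λ‖₂² / k^{3/2} for k large enough. -/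
open Finset Real

lemma Real.log_le_sqrt {x : ℝ} (hx : 0 ≤ x) : log x ≤ √x := by
  rcases hx.eq_or_lt with rfl | hx
  · simp
  set y := √(√x)
  have hy : 0 < y := sqrt_pos.2 (sqrt_pos.2 hx)
  have hlog : log x = 4 * log y := by
    rw [log_sqrt (sqrt_nonneg x), log_sqrt hx.le]
    ring
  have hsq : y ^ 2 = √x := sq_sqrt (sqrt_nonneg x)
  -- `4 (y - 1) ≤ y ^ 2` is `(y - 2) ^ 2 ≥ 0`
  nlinarith [log_le_sub_one_of_pos hy, sq_nonneg (y - 2)]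

lemma Real.one_sub_pow_le_exp_neg_mul {t : ℝ} (ht : t ≤ 1) (s : ℕ) :
    (1 - t) ^ s ≤ exp (-(s * t)) :=
  calc (1 - t) ^ s ≤ exp (-t) ^ s := pow_le_pow_left₀ (sub_nonneg.2 ht) (one_sub_le_exp_neg t) s
    _ = exp (-(s * t)) := by rw [← exp_nat_mul, mul_neg]

lemma Real.one_sub_log_div_sqrt_pow_le {x : ℝ} (hx : 1 ≤ x) {a : ℝ} {s : ℕ}
    (hs : a * √x ≤ s) : (1 - log x / √x) ^ s ≤ (x ^ a)⁻¹ := by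
  have hsqrt : 0 < √x := sqrt_pos.2 (by linarith)
  have hratio : 0 ≤ log x / √x := div_nonneg (log_nonneg hx) hsqrt.le
  have hexponent : a * log x ≤ s * (log x / √x) :=
    calc a * log x = a * √x * (log x / √x) := by field_simp
      _ ≤ s * (log x / √x) := mul_le_mul_of_nonneg_right hs hratio
  calc (1 - log x / √x) ^ s
      ≤ exp (-(s * (log x / √x))) :=
        one_sub_pow_le_exp_neg_mul (div_le_one_of_le₀ (log_le_sqrt (by linarith)) hsqrt.le) s
    _ ≤ exp (-(a * log x)) := exp_le_exp.2 (neg_le_neg hexponent)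
    _ = (x ^ a)⁻¹ := by
        rw [← rpow_neg (by linarith), rpow_def_of_pos (by linarith)]
        ring_nf

lemma abs_sum_sum_erase_le {ι : Type*} [Fintype ι] [DecidableEq ι]
    (lam a b : ι → ℝ) (x : ι → ι → ℝ) {γ ρ : ℝ} (hρ : 0 ≤ ρ)
    (ha : ∀ i, |a i| ≤ γ) (hb : ∀ j, |b j| ≤ γ) (hx : ∀ i j, i ≠ j → |x i j| ≤ ρ) :
    |∑ i, ∑ j ∈ univ.erase i, lam i * lam j * a i * b j * x i j|
      ≤ γ ^ 2 * ρ * (Fintype.card ι * ∑ i, lam i ^ 2) := by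
  have hterm : ∀ i j, i ≠ j →
      |lam i * lam j * a i * b j * x i j| ≤ γ ^ 2 * ρ * (|lam i| * |lam j|) := by
    intro i j hij
    have hab : |a i| * |b j| ≤ γ ^ 2 := by
      rw [sq]; exact mul_le_mul (ha i) (hb j) (abs_nonneg _) ((abs_nonneg _).trans (ha i))
    rw [abs_mul, abs_mul, abs_mul, abs_mul]
    calc |lam i| * |lam j| * |a i| * |b j| * |x i j|
        = (|a i| * |b j|) * |x i j| * (|lam i| * |lam j|) := by ring
      _ ≤ γ ^ 2 * ρ * (|lam i| * |lam j|) := by gcongr; exact hx i j hij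
  have hcauchy : (∑ i, |lam i|) ^ 2 ≤ Fintype.card ι * ∑ i, lam i ^ 2 := by
    simpa only [sq_abs, card_univ] using sq_sum_le_card_mul_sum_sq (s := univ) (f := fun i => |lam i|)
  have hγρ : 0 ≤ γ ^ 2 * ρ := mul_nonneg (sq_nonneg γ) hρ
  calc |∑ i, ∑ j ∈ univ.erase i, lam i * lam j * a i * b j * x i j|
      ≤ ∑ i, ∑ j ∈ univ.erase i, |lam i * lam j * a i * b j * x i j| :=
        (abs_sum_le_sum_abs _ _).trans (sum_le_sum fun i _ => abs_sum_le_sum_abs _ _)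
    _ ≤ ∑ i, ∑ j ∈ univ.erase i, γ ^ 2 * ρ * (|lam i| * |lam j|) :=
        sum_le_sum fun i _ => sum_le_sum fun j hj => hterm i j (ne_of_mem_erase hj).symm
    _ ≤ ∑ i, ∑ j, γ ^ 2 * ρ * (|lam i| * |lam j|) :=
        sum_le_sum fun i _ => sum_le_sum_of_subset_of_nonneg (erase_subset _ _)
          fun j _ _ => by positivity
    _ = γ ^ 2 * ρ * (∑ i, |lam i|) ^ 2 := by
        rw [sq (∑ i, |lam i|), sum_mul_sum, mul_sum]; simp only [mul_sum]
    _ ≤ γ ^ 2 * ρ * (Fintype.card ι * ∑ i, lam i ^ 2) := mul_le_mul_of_nonneg_left hcauchy hγρ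

/-- Under angular separation `|⟨wᵢ,wⱼ⟩| ≤ 1 − (log k)/√k`, for `s ≥ (3/2)√k` the
off-diagonal randomized sum is bounded by `(1 − (log k)/√k)^s ‖λ‖₂²`, which for
large enough `k` is at most `‖λ‖₂²/k^{3/2}`. -/
theorem offdiagonal_sum_decay :
    ∃ K : ℕ, ∀ k : ℕ, K ≤ k → ∀ d : ℕ,
      ∀ w : Fin k → EuclideanSpace ℝ (Fin d), (∀ i, ‖w i‖ = 1) →
      (∀ i j, i ≠ j → |(inner ℝ (w i) (w j) : ℝ)| ≤ 1 - Real.log k / Real.sqrt k) →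
      ∀ lam c chat : Fin k → ℝ,
      (∀ i, c i = 1 / Real.sqrt k ∨ c i = -(1 / Real.sqrt k)) →
      (∀ i, chat i = 1 / Real.sqrt k ∨ chat i = -(1 / Real.sqrt k)) →
      ∀ s : ℕ, (3 / 2 : ℝ) * Real.sqrt k ≤ s →
      |∑ i, ∑ j ∈ Finset.univ.erase i,
          lam i * lam j * c i * chat j * (inner ℝ (w i) (w j) : ℝ) ^ s|
          ≤ (1 - Real.log k / Real.sqrt k) ^ s * ∑ i, lam i ^ 2 ∧
      (1 - Real.log k / Real.sqrt k) ^ s * ∑ i, lam i ^ 2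
          ≤ (∑ i, lam i ^ 2) / (k : ℝ) ^ ((3 : ℝ) / 2) := by
  refine ⟨1, fun k hk d w _ hsep lam c chat hc hchat s hs => ?_⟩
  have hk : (1 : ℝ) ≤ k := by exact_mod_cast hk
  have hsqrt : 0 < √(k : ℝ) := sqrt_pos.2 (by linarith)
  have hρ : 0 ≤ 1 - log k / √k :=
    sub_nonneg.2 (div_le_one_of_le₀ (log_le_sqrt (by linarith)) hsqrt.le)
  have hsign : ∀ a : Fin k → ℝ, (∀ i, a i = 1 / √k ∨ a i = -(1 / √k)) → ∀ i, |a i| ≤ 1 / √k :=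
    fun a ha i => ((abs_eq (by positivity)).2 (ha i)).le
  constructor
  · calc _ ≤ (1 / √k) ^ 2 * (1 - log k / √k) ^ s * (Fintype.card (Fin k) * ∑ i, lam i ^ 2) :=
          abs_sum_sum_erase_le lam c chat _ (pow_nonneg hρ s) (hsign c hc) (hsign chat hchat)
            fun i j hij => by rw [abs_pow]; exact pow_le_pow_left₀ (abs_nonneg _) (hsep i j hij) s
      _ = (1 - log k / √k) ^ s * ∑ i, lam i ^ 2 := by
          rw [Fintype.card_fin, div_pow, sq_sqrt (by linarith)]
          field_simp
  · rw [div_eq_inv_mul (∑ i, lam i ^ 2)]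
    exact mul_le_mul_of_nonneg_right (one_sub_log_div_sqrt_pow_le hk hs)
      (sum_nonneg fun i _ => sq_nonneg _)
end
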